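/- Let A be a set of bounded operators on a Hilbert space H such that each T ∈ A leaves a closed subspace N invariant. If every T ∈ A is essentially normal and the restriction T|_N of every T ∈ A to N is essentially normal, then for every T ∈ A the compression of T to N⊥ (the induced operator on the quotient H/N) is essentially normal. -/

import Mathlib

/-!
With respect to `H = N ⊕ Nᗮ` an operator leaving `N` invariant is upper triangular,
`T = [A B; 0 D]`, and the diagonal corners of its self-commutator are
`A*A - AA* - BB*` and `B*B + D*D - DD*`. If `T` and `A` are essentially normal, the first
corner shows that `BB*` is compact, hence so is `B*` and then `B*B`; the second corner then
shows that `D*D - DD*` is compact.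
-/

open ContinuousLinearMap Metric Set

def selfCommutator {R : Type*} [Mul R] [Sub R] [Star R] (a : R) : R := star a * a - a * star a

section Corners

variable {R : Type*} [Ring R] {p t : R}

theorem mul_mul_eq_mul_of_one_sub_mul_mul_eq_zero (ht : (1 - p) * t * p = 0) :
    p * t * p = t * p := by
  rw [sub_mul, sub_mul, one_mul, sub_eq_zero] at ht
  exact ht.symm

variable [StarRing R]

namespace IsStarProjection

theorem mul_star_mul_eq_mul_of_one_sub_mul_mul_eq_zero (hp : IsStarProjection p)
    (ht : (1 - p) * t * p = 0) : p * star t * p = p * star t := by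
  simpa [hp.isSelfAdjoint.star_eq, mul_assoc] using
    congr(star $(mul_mul_eq_mul_of_one_sub_mul_mul_eq_zero ht))

/-- With these rules (also at `x = 1`), the corner identities below become identities in a free
ring. -/
private theorem corner_rewrite_rules (hp : IsStarProjection p) (ht : (1 - p) * t * p = 0) :
    (∀ x, p * (p * x) = p * x) ∧ (∀ x, p * (t * (p * x)) = t * (p * x)) ∧
      ∀ x, p * (star t * (p * x)) = p * (star t * x) := by
  refine ⟨fun x => ?_, fun x => ?_, fun x => ?_⟩ <;> simp only [← mul_assoc]
  · rw [hp.isIdempotentElem.eq]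
  · rw [mul_mul_eq_mul_of_one_sub_mul_mul_eq_zero ht]
  · rw [hp.mul_star_mul_eq_mul_of_one_sub_mul_mul_eq_zero ht]

theorem mul_selfCommutator_mul (hp : IsStarProjection p) (ht : (1 - p) * t * p = 0) :
    p * selfCommutator t * p =
      selfCommutator (p * t * p) - (p * t * (1 - p)) * star (p * t * (1 - p)) := by
  obtain ⟨h₁, h₂, h₃⟩ := hp.corner_rewrite_rules ht
  have h₂' := h₂ 1; have h₃' := h₃ 1
  simp only [selfCommutator, star_mul, star_sub, hp.isSelfAdjoint.star_eq, mul_sub, sub_mul,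
    mul_one, mul_assoc] at h₂' h₃' ⊢
  simp only [h₁, h₂, h₂', h₃']
  noncomm_ring

theorem one_sub_mul_selfCommutator_mul (hp : IsStarProjection p) (ht : (1 - p) * t * p = 0) :
    (1 - p) * selfCommutator t * (1 - p) =
      selfCommutator ((1 - p) * t * (1 - p)) + star (p * t * (1 - p)) * (p * t * (1 - p)) := by
  obtain ⟨h₁, h₂, h₃⟩ := hp.corner_rewrite_rules ht
  have h₂' := h₂ 1; have h₃' := h₃ 1
  simp only [selfCommutator, star_mul, star_sub, hp.isSelfAdjoint.star_eq, mul_sub, sub_mul,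
    mul_one, one_mul, mul_assoc] at h₂' h₃' ⊢
  simp only [h₁, h₂, h₃, h₂', h₃']
  noncomm_ring

end IsStarProjection

end Corners

section Compact

variable {𝕜 E F : Type*} [RCLike 𝕜] [NormedAddCommGroup E] [InnerProductSpace 𝕜 E]
  [CompleteSpace E] [NormedAddCommGroup F] [InnerProductSpace 𝕜 F] [CompleteSpace F]

theorem ContinuousLinearMap.norm_apply_sq_le_norm_adjoint_comp_self_apply_mul
    (S : E →L[𝕜] F) (x : E) : ‖S x‖ ^ 2 ≤ ‖(adjoint S ∘L S) x‖ * ‖x‖ := by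
  rw [apply_norm_sq_eq_inner_adjoint_left]
  exact (RCLike.re_le_norm _).trans (norm_inner_le_norm _ _)

/-- Points of the unit ball whose images under `S†S` are `ε²/2`-close have images under `S`
that are `ε`-close, so `S` maps the unit ball to a totally bounded set. -/
theorem IsCompactOperator.of_adjoint_comp_self {S : E →L[𝕜] F}
    (h : IsCompactOperator (adjoint S ∘L S)) : IsCompactOperator S := by
  refine (isCompactOperator_iff_isCompact_closure_image_closedBall (S : E →ₗ[𝕜] F) one_pos).2 <|
    (TotallyBounded.closure (totallyBounded_iff.2 fun ε hε => ?_)).isCompact_of_isClosed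
      isClosed_closure
  obtain ⟨K, hK, hBK⟩ :=
    IsCompactOperator.image_closedBall_subset_compact (f := (adjoint S ∘L S : E →ₗ[𝕜] E)) h 1
  obtain ⟨t, htB, ht, hcover⟩ := exists_subset_image_finite_and.1 <|
    finite_approx_of_totallyBounded (hK.totallyBounded.subset hBK) (ε ^ 2 / 2) (by positivity)
  simp only [coe_coe] at hcover
  refine ⟨S '' t, ht.image S, ?_⟩
  simp only [coe_coe]
  rintro _ ⟨x, hx, rfl⟩
  rw [biUnion_image] at hcover ⊢
  obtain ⟨y, hy, hxy⟩ := mem_iUnion₂.1 (hcover ⟨x, hx, rfl⟩)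
  refine mem_iUnion₂.2 ⟨y, hy, ?_⟩
  rw [mem_ball, dist_eq_norm, ← map_sub] at hxy ⊢
  have hxy_le : ‖x - y‖ ≤ 2 := calc
    ‖x - y‖ ≤ ‖x‖ + ‖y‖ := norm_sub_le x y
    _ ≤ 1 + 1 := add_le_add (mem_closedBall_zero_iff.1 hx) (mem_closedBall_zero_iff.1 (htB hy))
    _ = 2 := by norm_num
  have hsq : ‖S (x - y)‖ ^ 2 < ε ^ 2 := calc
    ‖S (x - y)‖ ^ 2 ≤ ‖(adjoint S ∘L S) (x - y)‖ * ‖x - y‖ :=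
      S.norm_apply_sq_le_norm_adjoint_comp_self_apply_mul _
    _ ≤ ‖(adjoint S ∘L S) (x - y)‖ * 2 := by gcongr
    _ < ε ^ 2 / 2 * 2 := by gcongr
    _ = ε ^ 2 := by ring
  exact (pow_lt_pow_iff_left₀ (norm_nonneg _) hε.le two_ne_zero).1 hsq

end Compact

/-- if every operator `T` in a family `𝒜` leaves the closed
subspace `N` invariant, is essentially normal, and its restriction to `N`
(realized as the compression `P T P`) is essentially normal, then the
compression of every `T ∈ 𝒜` to `Nᗮ` (the quotient module operator) is
essentially normal. -/
theorem quotient_essentially_normal_of_family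
    {H : Type*} [NormedAddCommGroup H] [InnerProductSpace ℂ H] [CompleteSpace H]
    (N : Submodule ℂ H) [CompleteSpace N]
    (P : H →L[ℂ] H) (hP : P = N.subtypeL ∘L N.orthogonalProjection)
    (𝒜 : Set (H →L[ℂ] H))
    (hinv : ∀ T ∈ 𝒜, (1 - P) ∘L T ∘L P = 0)
    (hT : ∀ T ∈ 𝒜, IsCompactOperator ⇑(adjoint T ∘L T - T ∘L adjoint T))
    (hres : ∀ T ∈ 𝒜, IsCompactOperator
      ⇑(adjoint (P ∘L T ∘L P) ∘L (P ∘L T ∘L P) - (P ∘L T ∘L P) ∘L adjoint (P ∘L T ∘L P))) :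
    ∀ T ∈ 𝒜, IsCompactOperator
      ⇑((adjoint ((1 - P) ∘L T ∘L (1 - P)) ∘L ((1 - P) ∘L T ∘L (1 - P)) -
        ((1 - P) ∘L T ∘L (1 - P)) ∘L adjoint ((1 - P) ∘L T ∘L (1 - P)) : H →L[ℂ] H)) := by
  intro T hT𝒜
  have hp : IsStarProjection P := hP ▸ isStarProjection_starProjection
  have hTP : (1 - P) * T * P = 0 := by rw [mul_assoc]; exact hinv T hT𝒜
  have hcorner (Q : H →L[ℂ] H) : IsCompactOperator ⇑(Q * selfCommutator T * Q) :=
    ((hT T hT𝒜).comp_clm Q).clm_comp Q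
  have hA : IsCompactOperator ⇑(selfCommutator (P * T * P)) := by
    rw [mul_assoc]; exact hres T hT𝒜
  set B := P * T * (1 - P)
  have hBBstar : IsCompactOperator (B * star B) := by
    rw [← sub_sub_cancel (selfCommutator (P * T * P)) (B * star B),
      ← hp.mul_selfCommutator_mul hTP]
    exact hA.sub (hcorner P)
  have hBstar : IsCompactOperator ⇑(star B) :=
    .of_adjoint_comp_self (S := star B) (by rwa [← star_eq_adjoint, star_star])
  change IsCompactOperator ⇑(selfCommutator ((1 - P) * (T * (1 - P))))
  rw [← mul_assoc, eq_sub_of_add_eq (hp.one_sub_mul_selfCommutator_mul hTP).symm]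
  exact (hcorner (1 - P)).sub (hBstar.comp_clm B)
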